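/- If φ: G → H is a ×-homotopy equivalence between finite graphs with no isolated vertices (i.e., there is a graph morphism ψ: H → G with φ∘ψ ≃ id_H and ψ∘φ ≃ id_G), then the induced functor φ_*: Π(G) → Π(H) is an equivalence of categories: it is full, faithful, and essentially surjective. In particular, every vertex of H is connected by a walk to a vertex φ(v); every ≡-class of walks from φ(v) to φ(w) in H is φ_* of some ≡-class of walks from v to w in G; and φ∘α ≡ φ∘β in H implies α ≡ β in G. -/

import Mathlib

/-- A graph: vertex type `V` with a symmetric adjacency relation (loops allowed). -/
structure SGraph (V : Type) where
  Adj : V → V → Prop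
  symm : Symmetric Adj

variable {V W X : Type}

/-- `l` is the (nonempty) vertex sequence of a walk in `G`. -/
def IsWalk (G : SGraph V) (l : List V) : Prop :=
  l ≠ [] ∧ l.Chain' G.Adj

/-- `l` is a walk in `G` from `x` to `y`. -/
def IsWalkFrom (G : SGraph V) (x y : V) (l : List V) : Prop :=
  l.Chain' G.Adj ∧ l.head? = some x ∧ l.getLast? = some y

/-- Concatenation of walks sharing an endpoint: follow `l`, then `m`. -/
def wconcat (l m : List V) : List V := l ++ m.tail

/-- A walk is prunable if some vertex `vᵢ` satisfies `vᵢ = vᵢ₊₂`. -/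
def Prunable (l : List V) : Prop :=
  ∃ (p s : List V) (a b : V), l = p ++ a :: b :: a :: s

/-- `m` is obtained from `l` by a single prune (deleting `vᵢ, vᵢ₊₁` when `vᵢ = vᵢ₊₂`). -/
def PruneOf (l m : List V) : Prop :=
  ∃ (p s : List V) (a b : V), l = p ++ a :: b :: a :: s ∧ m = p ++ a :: s

/-- A single prune step (in either direction) between walks of `G`. -/
def PruneStep (G : SGraph V) (l m : List V) : Prop :=
  IsWalk G l ∧ IsWalk G m ∧ (PruneOf l m ∨ PruneOf m l)

/-- Prune equivalence: the equivalence relation on walks of `G` generated by prunes. -/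
def PruneEqv (G : SGraph V) : List V → List V → Prop :=
  Relation.EqvGen (PruneStep G)

/-- A spider move: two walks of `G` of the same length which agree at every index
except (at most) a single interior index. -/
def SpiderStep (G : SGraph V) (l m : List V) : Prop :=
  IsWalk G l ∧ IsWalk G m ∧ l.length = m.length ∧
    ∃ i : ℕ, 0 < i ∧ i + 1 < l.length ∧ ∀ j : ℕ, j ≠ i → l[j]? = m[j]?

/-- Homotopy rel endpoints (`≡`): the equivalence relation on walks of `G`
generated by prunes and spider moves. -/
def HomEqv (G : SGraph V) : List V → List V → Prop :=
  Relation.EqvGen (fun l m => PruneStep G l m ∨ SpiderStep G l m)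

/-- A graph morphism. -/
def IsHom (G : SGraph V) (H : SGraph W) (f : V → W) : Prop :=
  ∀ {u v : V}, G.Adj u v → H.Adj (f u) (f v)

/-- One step of a ×-homotopy between graph morphisms. -/
def HtpyStep (G : SGraph V) (H : SGraph W) (f g : V → W) : Prop :=
  IsHom G H f ∧ IsHom G H g ∧ ∀ u v, G.Adj u v → H.Adj (f u) (g v)

/-- ×-homotopy of graph morphisms. -/
def Homotopic (G : SGraph V) (H : SGraph W) : (V → W) → (V → W) → Prop :=
  Relation.ReflTransGen (HtpyStep G H)

/-!
A ×-homotopy `f ≃ g` induces a natural isomorphism `f_* ≅ g_*` of functors `Π(G) → Π(H)`: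
a single step of the homotopy yields natural walks `f v ⟶ g v`, natural transformations
compose, and all of them are invertible because a walk followed by its reverse prunes to a
point. So `ψ_* ∘ φ_* ≅ id` and `φ_* ∘ ψ_* ≅ id`: faithfulness and fullness of `φ_*` follow
by cancelling the natural walks, essential surjectivity by reversing them.
-/

local infixl:65 " ⬝ " => wconcat
local notation:50 l:51 " ≡[" G "] " m:51 => HomEqv G l m

section Walks

variable {G : SGraph V} {H : SGraph W} {x y z : V} {l m : List V}

lemma isWalk_iff : IsWalk G l ↔ l ≠ [] ∧ l.IsChain G.Adj := Iff.rfl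

lemma isWalkFrom_iff :
    IsWalkFrom G x y l ↔ l.IsChain G.Adj ∧ l.head? = some x ∧ l.getLast? = some y := Iff.rfl

lemma IsWalkFrom.ne_nil (h : IsWalkFrom G x y l) : l ≠ [] := by
  rintro rfl
  simp [isWalkFrom_iff] at h

lemma IsWalkFrom.isWalk (h : IsWalkFrom G x y l) : IsWalk G l :=
  ⟨h.ne_nil, h.1⟩

lemma isWalkFrom_singleton (x : V) : IsWalkFrom G x x [x] := by
  simp [isWalkFrom_iff]

lemma IsWalkFrom.reverse (h : IsWalkFrom G x y l) : IsWalkFrom G y x l.reverse := by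
  obtain ⟨hc, hx, hy⟩ := h
  refine ⟨List.isChain_reverse.2 (hc.imp fun _ _ hab => G.symm hab), ?_, ?_⟩
  · rwa [List.head?_reverse]
  · rwa [List.getLast?_reverse]

lemma IsWalkFrom.map {f : V → W} (hf : IsHom G H f) (h : IsWalkFrom G x y l) :
    IsWalkFrom H (f x) (f y) (l.map f) := by
  obtain ⟨hc, hx, hy⟩ := h
  refine ⟨(List.isChain_map f).2 (hc.imp fun _ _ hab => hf hab), ?_, ?_⟩
  · rw [List.head?_map, hx]; rfl
  · rw [List.getLast?_map, hy]; rfl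

lemma wconcat_cons (l m : List V) (y : V) : l ⬝ (y :: m) = l ++ m := rfl

lemma IsWalkFrom.wconcat (hl : IsWalkFrom G x y l) (hm : IsWalkFrom G y z m) :
    IsWalkFrom G x z (l ⬝ m) := by
  obtain ⟨hlc, hlx, hly⟩ := hl
  rcases m with _ | ⟨y', m⟩
  · exact absurd rfl hm.ne_nil
  obtain ⟨hmc, ⟨⟩, hmz⟩ := hm
  refine ⟨hlc.append hmc.tail fun a ha b hb => ?_, ?_, ?_⟩
  · rw [hly, Option.mem_some_iff] at ha
    exact ha ▸ hmc.rel_head? hb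
  · rcases l with _ | ⟨a, l⟩
    · simp at hlx
    · simpa [wconcat_cons] using hlx
  · rcases m with _ | ⟨b, m⟩
    · simp only [List.getLast?_singleton, Option.some_inj] at hmz
      simpa [wconcat_cons, ← hmz] using hly
    · simpa [wconcat_cons, List.getLast?_append] using hmz

lemma wconcat_assoc (l : List V) {m : List V} (hm : m ≠ []) (n : List V) :
    l ⬝ m ⬝ n = l ⬝ (m ⬝ n) := by
  rcases m with _ | ⟨a, m⟩
  · exact absurd rfl hm
  · simp [wconcat]

@[simp]
lemma wconcat_singleton (l : List V) (y : V) : l ⬝ [y] = l := by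
  simp [wconcat]

lemma singleton_wconcat (h : l.head? = some x) : [x] ⬝ l = l := by
  rcases l with _ | ⟨a, l⟩
  · simp at h
  · obtain ⟨⟩ := Option.some_inj.1 h
    rfl

end Walks

section HomEqv

variable {G : SGraph V} {H : SGraph W} {x y : V} {l m n : List V}

lemma HomEqv.refl (l : List V) : l ≡[G] l := Relation.EqvGen.refl l

lemma HomEqv.symm (h : l ≡[G] m) : m ≡[G] l := Relation.EqvGen.symm _ _ h

lemma HomEqv.trans (h : l ≡[G] m) (h' : m ≡[G] n) : l ≡[G] n :=
  Relation.EqvGen.trans _ _ _ h h'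

instance : Trans (HomEqv G) (HomEqv G) (HomEqv G) := ⟨HomEqv.trans⟩

abbrev HomStep (G : SGraph V) (l m : List V) : Prop := PruneStep G l m ∨ SpiderStep G l m

lemma HomEqv.of_homStep (h : HomStep G l m) : l ≡[G] m := Relation.EqvGen.rel _ _ h

lemma HomStep.isWalk (h : HomStep G l m) : IsWalk G l ∧ IsWalk G m := by
  rcases h with ⟨hl, hm, -⟩ | ⟨hl, hm, -⟩ <;> exact ⟨hl, hm⟩

lemma PruneOf.head?_eq_and_getLast?_eq (h : PruneOf l m) :
    l.head? = m.head? ∧ l.getLast? = m.getLast? := by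
  obtain ⟨p, s, a, b, rfl, rfl⟩ := h
  constructor
  · cases p <;> simp
  · cases s using List.reverseRecOn <;> simp

lemma HomStep.head?_eq_and_getLast?_eq (h : HomStep G l m) :
    l.head? = m.head? ∧ l.getLast? = m.getLast? := by
  rcases h with ⟨-, -, h | h⟩ | ⟨-, -, hlen, i, hi0, hi, heq⟩
  · exact h.head?_eq_and_getLast?_eq
  · exact (h.head?_eq_and_getLast?_eq).imp Eq.symm Eq.symm
  · rw [List.head?_eq_getElem?, List.head?_eq_getElem?, List.getLast?_eq_getElem?,
      List.getLast?_eq_getElem?, ← hlen]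
    exact ⟨heq 0 (by omega), heq _ (by omega)⟩

lemma HomEqv.eq_or_isWalk (h : l ≡[G] m) :
    l = m ∨ IsWalk G l ∧ IsWalk G m ∧ l.head? = m.head? ∧ l.getLast? = m.getLast? := by
  induction h with
  | rel l m h =>
    exact .inr ⟨(HomStep.isWalk h).1, (HomStep.isWalk h).2, HomStep.head?_eq_and_getLast?_eq h⟩
  | refl => exact .inl (Eq.refl _)
  | symm l m _ ih =>
    rcases ih with rfl | ⟨hl, hm, hhead, hlast⟩
    · exact .inl (Eq.refl _)
    · exact .inr ⟨hm, hl, hhead.symm, hlast.symm⟩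
  | trans l m n _ _ ih ih' =>
    rcases ih with rfl | ⟨hl, hm, hhead, hlast⟩
    · exact ih'
    rcases ih' with rfl | ⟨-, hn, hhead', hlast'⟩
    · exact .inr ⟨hl, hm, hhead, hlast⟩
    · exact .inr ⟨hl, hn, hhead.trans hhead', hlast.trans hlast'⟩

lemma HomEqv.isWalkFrom (h : l ≡[G] m) (hl : IsWalkFrom G x y l) : IsWalkFrom G x y m := by
  rcases h.eq_or_isWalk with rfl | ⟨-, hm, hhead, hlast⟩
  · exact hl
  · exact ⟨hm.2, hhead ▸ hl.2.1, hlast ▸ hl.2.2⟩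

lemma HomStep.map {f : V → W} (hf : IsHom G H f) (h : HomStep G l m) :
    HomStep H (l.map f) (m.map f) := by
  have hwalk : ∀ {l}, IsWalk G l → IsWalk H (l.map f) := fun hl =>
    ⟨by simpa using hl.1, (List.isChain_map f).2 (hl.2.imp fun _ _ hab => hf hab)⟩
  rcases h with ⟨hl, hm, h⟩ | ⟨hl, hm, hlen, i, hi0, hi, heq⟩
  · refine .inl ⟨hwalk hl, hwalk hm, ?_⟩
    rcases h with ⟨p, s, a, b, rfl, rfl⟩ | ⟨p, s, a, b, rfl, rfl⟩
    · exact .inl ⟨p.map f, s.map f, f a, f b, by simp, by simp⟩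
    · exact .inr ⟨p.map f, s.map f, f a, f b, by simp, by simp⟩
  · refine .inr ⟨hwalk hl, hwalk hm, by simp [hlen], i, hi0, by simpa using hi, fun j hj => ?_⟩
    simp [List.getElem?_map, heq j hj]

lemma HomEqv.map {f : V → W} (hf : IsHom G H f) (h : l ≡[G] m) :
    l.map f ≡[H] m.map f := by
  induction h with
  | rel l m h => exact .of_homStep (HomStep.map hf h)
  | refl => exact .refl _
  | symm _ _ _ ih => exact ih.symm
  | trans _ _ _ _ _ ih ih' => exact ih.trans ih'

lemma HomEqv.spider {p r : List V} {a b : V} (hp : p ≠ []) (hr : r ≠ [])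
    (ha : IsWalk G (p ++ a :: r)) (hb : IsWalk G (p ++ b :: r)) :
    p ++ a :: r ≡[G] p ++ b :: r := by
  refine .of_homStep (.inr ⟨ha, hb, by simp, p.length, List.length_pos_iff.2 hp, ?_, ?_⟩)
  · simpa using List.length_pos_iff.2 hr
  · intro j hj
    rw [List.getElem?_append, List.getElem?_append]
    split_ifs
    · rfl
    · rw [List.getElem?_cons, List.getElem?_cons, if_neg (by omega), if_neg (by omega)]

end HomEqv

section Append

variable {G : SGraph V} {l m p t : List V}

lemma IsWalk.append_of_head?_eq (hpl : IsWalk G (p ++ l)) (hm : IsWalk G m)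
    (hhead : m.head? = l.head?) : IsWalk G (p ++ m) := by
  obtain ⟨-, hc⟩ := isWalk_iff.1 hpl
  rw [List.isChain_append] at hc
  exact ⟨by simp [hm.1], hc.1.append hm.2 (hhead ▸ hc.2.2)⟩

lemma IsWalk.append_of_getLast?_eq (hlt : IsWalk G (l ++ t)) (hm : IsWalk G m)
    (hlast : m.getLast? = l.getLast?) : IsWalk G (m ++ t) := by
  obtain ⟨-, hc⟩ := isWalk_iff.1 hlt
  rw [List.isChain_append] at hc
  exact ⟨by simp [hm.1], hm.2.append hc.2.1 (hlast ▸ hc.2.2)⟩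

lemma HomStep.append_left (h : HomStep G l m) (hpl : IsWalk G (p ++ l)) :
    HomStep G (p ++ l) (p ++ m) := by
  have hpm := hpl.append_of_head?_eq h.isWalk.2 h.head?_eq_and_getLast?_eq.1.symm
  rcases h with ⟨-, -, h⟩ | ⟨-, -, hlen, i, hi0, hi, heq⟩
  · refine .inl ⟨hpl, hpm, ?_⟩
    rcases h with ⟨q, s, a, b, rfl, rfl⟩ | ⟨q, s, a, b, rfl, rfl⟩
    · exact .inl ⟨p ++ q, s, a, b, by simp, by simp⟩
    · exact .inr ⟨p ++ q, s, a, b, by simp, by simp⟩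
  · refine .inr ⟨hpl, hpm, by simp [hlen], p.length + i, by omega, by simp; omega,
      fun j hj => ?_⟩
    rw [List.getElem?_append, List.getElem?_append]
    split_ifs
    · rfl
    · exact heq _ (by omega)

lemma HomStep.append_right (h : HomStep G l m) (hlt : IsWalk G (l ++ t)) :
    HomStep G (l ++ t) (m ++ t) := by
  have hmt := hlt.append_of_getLast?_eq h.isWalk.2 h.head?_eq_and_getLast?_eq.2.symm
  rcases h with ⟨-, -, h⟩ | ⟨-, -, hlen, i, hi0, hi, heq⟩
  · refine .inl ⟨hlt, hmt, ?_⟩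
    rcases h with ⟨q, s, a, b, rfl, rfl⟩ | ⟨q, s, a, b, rfl, rfl⟩
    · exact .inl ⟨q, s ++ t, a, b, by simp, by simp⟩
    · exact .inr ⟨q, s ++ t, a, b, by simp, by simp⟩
  · refine .inr ⟨hlt, hmt, by simp [hlen], i, hi0, by simp; omega, fun j hj => ?_⟩
    rw [List.getElem?_append, List.getElem?_append, hlen]
    split_ifs
    · exact heq j hj
    · rfl

lemma HomEqv.append_left (h : l ≡[G] m) (hpl : IsWalk G (p ++ l)) :
    p ++ l ≡[G] p ++ m := by
  induction h with
  | rel l m h => exact .of_homStep (HomStep.append_left h hpl)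
  | refl => exact .refl _
  | symm l m h ih =>
    rcases HomEqv.eq_or_isWalk h with rfl | ⟨hl, -, hhead, -⟩
    · exact .refl _
    · exact (ih (hpl.append_of_head?_eq hl hhead)).symm
  | trans l m n h _ ih ih' =>
    rcases HomEqv.eq_or_isWalk h with rfl | ⟨-, hm, hhead, -⟩
    · exact ih' hpl
    · exact (ih hpl).trans (ih' (hpl.append_of_head?_eq hm hhead.symm))

lemma HomEqv.append_right (h : l ≡[G] m) (hlt : IsWalk G (l ++ t)) :
    l ++ t ≡[G] m ++ t := by
  induction h with
  | rel l m h => exact .of_homStep (HomStep.append_right h hlt)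
  | refl => exact .refl _
  | symm l m h ih =>
    rcases HomEqv.eq_or_isWalk h with rfl | ⟨hl, -, -, hlast⟩
    · exact .refl _
    · exact (ih (hlt.append_of_getLast?_eq hl hlast)).symm
  | trans l m n h _ ih ih' =>
    rcases HomEqv.eq_or_isWalk h with rfl | ⟨-, hm, -, hlast⟩
    · exact ih' hlt
    · exact (ih hlt).trans (ih' (hlt.append_of_getLast?_eq hm hlast.symm))

end Append

section Groupoid

variable {G : SGraph V} {x y z : V} {l m q : List V}

lemma wconcat_eq_dropLast_append (hq : q.getLast? = some y) (hl : l.head? = some y) :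
    q ⬝ l = q.dropLast ++ l := by
  rcases l with _ | ⟨a, l⟩
  · simp at hl
  obtain ⟨⟩ := Option.some_inj.1 hl
  have hq' : q ≠ [] := by rintro rfl; simp at hq
  rw [List.getLast?_eq_some_getLast hq', Option.some_inj] at hq
  conv_lhs => rw [← List.dropLast_append_getLast hq', hq]
  simp [wconcat]

lemma HomEqv.wconcat_left (hq : IsWalkFrom G x y q) (hl : IsWalkFrom G y z l)
    (h : l ≡[G] m) : q ⬝ l ≡[G] q ⬝ m := by
  have hm := h.isWalkFrom hl
  rw [wconcat_eq_dropLast_append hq.2.2 hl.2.1, wconcat_eq_dropLast_append hq.2.2 hm.2.1]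
  refine h.append_left ?_
  rw [← wconcat_eq_dropLast_append hq.2.2 hl.2.1]
  exact (hq.wconcat hl).isWalk

lemma HomEqv.wconcat_right (hl : IsWalkFrom G x y l) (hq : IsWalkFrom G y z q)
    (h : l ≡[G] m) : l ⬝ q ≡[G] m ⬝ q :=
  h.append_right (hl.wconcat hq).isWalk

lemma wconcat_reverse_homEqv (hq : IsWalkFrom G x y q) :
    q ⬝ q.reverse ≡[G] [x] := by
  induction q using List.reverseRecOn generalizing y with
  | nil => exact absurd rfl hq.ne_nil
  | append_singleton q b ih =>
    rcases q.eq_nil_or_concat' with rfl | ⟨d, a, rfl⟩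
    · obtain ⟨-, ⟨⟩, -⟩ := hq
      simpa [wconcat] using HomEqv.refl _
    have hqa : IsWalkFrom G x a (d ++ [a]) :=
      ⟨hq.1.left_of_append, by simpa [List.head?_append] using hq.2.1, by simp⟩
    have hprune : PruneOf ((d ++ [a] ++ [b]) ⬝ (d ++ [a] ++ [b]).reverse)
        ((d ++ [a]) ⬝ (d ++ [a]).reverse) :=
      ⟨d, d.reverse, a, b, by simp [wconcat], by simp [wconcat]⟩
    exact .trans (.of_homStep (.inl ⟨(hq.wconcat hq.reverse).isWalk,
      (hqa.wconcat hqa.reverse).isWalk, .inl hprune⟩)) (ih hqa)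

lemma reverse_wconcat_wconcat_homEqv (hq : IsWalkFrom G x y q) (hl : IsWalkFrom G y z l) :
    q.reverse ⬝ (q ⬝ l) ≡[G] l := by
  have hloop := wconcat_reverse_homEqv hq.reverse
  rw [List.reverse_reverse] at hloop
  calc q.reverse ⬝ (q ⬝ l) = q.reverse ⬝ q ⬝ l := (wconcat_assoc _ hq.ne_nil _).symm
    _ ≡[G] [y] ⬝ l := hloop.wconcat_right (hq.reverse.wconcat hq) hl
    _ = l := singleton_wconcat hl.2.1

lemma wconcat_wconcat_reverse_homEqv (hl : IsWalkFrom G x y l) (hq : IsWalkFrom G y z q) :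
    l ⬝ q ⬝ q.reverse ≡[G] l :=
  calc l ⬝ q ⬝ q.reverse = l ⬝ (q ⬝ q.reverse) := wconcat_assoc _ hq.ne_nil _
    _ ≡[G] l ⬝ [y] := (wconcat_reverse_homEqv hq).wconcat_left hl (hq.wconcat hq.reverse)
    _ = l := wconcat_singleton l y

lemma HomEqv.cancel_left (hq : IsWalkFrom G x y q) (hl : IsWalkFrom G y z l)
    (hm : IsWalkFrom G y z m) (h : q ⬝ l ≡[G] q ⬝ m) : l ≡[G] m :=
  calc l ≡[G] q.reverse ⬝ (q ⬝ l) := (reverse_wconcat_wconcat_homEqv hq hl).symm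
    _ ≡[G] q.reverse ⬝ (q ⬝ m) := h.wconcat_left hq.reverse (hq.wconcat hl)
    _ ≡[G] m := reverse_wconcat_wconcat_homEqv hq hm

lemma HomEqv.cancel_right (hl : IsWalkFrom G x y l) (hm : IsWalkFrom G x y m)
    (hq : IsWalkFrom G y z q) (h : l ⬝ q ≡[G] m ⬝ q) : l ≡[G] m :=
  calc l ≡[G] l ⬝ q ⬝ q.reverse := (wconcat_wconcat_reverse_homEqv hl hq).symm
    _ ≡[G] m ⬝ q ⬝ q.reverse := h.wconcat_right (hl.wconcat hq) hq.reverse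
    _ ≡[G] m := wconcat_wconcat_reverse_homEqv hm hq

end Groupoid

/-- `s` is a natural transformation `f_* ⟹ g_*` of functors `Π(G) → Π(H)`. -/
structure IsNatural (G : SGraph V) (H : SGraph W) (f g : V → W) (s : V → List W) : Prop where
  isWalkFrom : ∀ v, IsWalkFrom H (f v) (g v) (s v)
  naturality : ∀ ⦃x y : V⦄ ⦃l : List V⦄, IsWalkFrom G x y l →
    l.map f ⬝ s y ≡[H] s x ⬝ l.map g

section Natural

variable {G : SGraph V} {H : SGraph W} {f g h : V → W} {s t : V → List W}

lemma isNatural_refl : IsNatural G H f f fun v => [f v] where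
  isWalkFrom v := isWalkFrom_singleton (f v)
  naturality x y l hl := by
    rw [wconcat_singleton, singleton_wconcat (by simp [hl.2.1])]
    exact .refl _

lemma IsNatural.trans (hf : IsHom G H f) (hg : IsHom G H g) (hs : IsNatural G H f g s)
    (ht : IsNatural G H g h t) : IsNatural G H f h fun v => s v ⬝ t v where
  isWalkFrom v := (hs.isWalkFrom v).wconcat (ht.isWalkFrom v)
  naturality x y l hl :=
    calc l.map f ⬝ (s y ⬝ t y) = l.map f ⬝ s y ⬝ t y :=
          (wconcat_assoc _ (hs.isWalkFrom y).ne_nil _).symm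
      _ ≡[H] s x ⬝ l.map g ⬝ t y :=
          (hs.naturality hl).wconcat_right ((hl.map hf).wconcat (hs.isWalkFrom y)) (ht.isWalkFrom y)
      _ = s x ⬝ (l.map g ⬝ t y) := wconcat_assoc _ (hl.map hg).ne_nil _
      _ ≡[H] s x ⬝ (t x ⬝ l.map h) :=
          (ht.naturality hl).wconcat_left (hs.isWalkFrom x) ((hl.map hg).wconcat (ht.isWalkFrom y))
      _ = s x ⬝ t x ⬝ l.map h := (wconcat_assoc _ (ht.isWalkFrom x).ne_nil _).symm

lemma IsNatural.of_adj (hf : IsHom G H f) (hg : IsHom G H g)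
    (hs : ∀ v, IsWalkFrom H (f v) (g v) (s v))
    (hadj : ∀ ⦃x y⦄, G.Adj x y → [f x, f y] ⬝ s y ≡[H] s x ⬝ [g x, g y]) :
    IsNatural G H f g s where
  isWalkFrom := hs
  naturality x y l hl := by
    induction l generalizing x with
    | nil => exact absurd rfl hl.ne_nil
    | cons a l ih =>
      obtain ⟨⟩ : a = x := by simpa using hl.2.1
      rcases l with _ | ⟨b, l⟩
      · obtain ⟨⟩ : a = y := by simpa using hl.2.2
        rw [List.map_singleton, List.map_singleton, wconcat_singleton, singleton_wconcat (hs _).2.1]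
        exact .refl _
      obtain ⟨hab, hbl⟩ := List.isChain_cons_cons.1 hl.1
      have hl' : IsWalkFrom G b y (b :: l) := ⟨hbl, rfl, by simpa using hl.2.2⟩
      have hedge : IsWalkFrom G a b [a, b] := ⟨List.isChain_pair.2 hab, rfl, rfl⟩
      calc (a :: b :: l).map f ⬝ s y = [f a, f b] ⬝ ((b :: l).map f ⬝ s y) := by
            simp [wconcat]
        _ ≡[H] [f a, f b] ⬝ (s b ⬝ (b :: l).map g) :=
            (ih _ hl').wconcat_left (hedge.map hf) ((hl'.map hf).wconcat (hs y))
        _ = [f a, f b] ⬝ s b ⬝ (b :: l).map g := (wconcat_assoc _ (hs b).ne_nil _).symm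
        _ ≡[H] s a ⬝ [g a, g b] ⬝ (b :: l).map g :=
            (hadj hab).wconcat_right ((hedge.map hf).wconcat (hs b)) (hl'.map hg)
        _ = s a ⬝ (a :: b :: l).map g := by rw [wconcat_assoc _ (by simp)]; rfl

/-- The walks `f v, g u, g v` through any neighbour `u` of `v` are natural: along an edge
`x ∼ y` two spider moves turn `f x, f y, g (u y), g y` into `f x, g (u x), g x, g y`. -/
lemma exists_isNatural_of_htpyStep (hG : ∀ v : V, ∃ u, G.Adj v u) (h : HtpyStep G H f g) :
    ∃ s, IsNatural G H f g s := by
  obtain ⟨hf, hg, hfg⟩ := h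
  choose u hu using hG
  have walk4 {a b c d : W} (hab : H.Adj a b) (hbc : H.Adj b c) (hcd : H.Adj c d) :
      IsWalk H [a, b, c, d] := by
    simp [isWalk_iff, List.isChain_cons_cons, hab, hbc, hcd]
  refine ⟨fun v => [f v, g (u v), g v], .of_adj hf hg (fun v => ?_) fun x y hxy => ?_⟩
  · simp [isWalkFrom_iff, List.isChain_cons_cons, hfg v (u v) (hu v), hg (G.symm (hu v))]
  calc [f x, f y] ⬝ [f y, g (u y), g y] = [f x, f y] ++ g (u y) :: [g y] := rfl
    _ ≡[H] [f x, f y] ++ g x :: [g y] := .spider (by simp) (by simp)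
        (walk4 (hf hxy) (hfg y (u y) (hu y)) (hg (G.symm (hu y))))
        (walk4 (hf hxy) (hfg y x (G.symm hxy)) (hg hxy))
    _ = [f x] ++ f y :: [g x, g y] := rfl
    _ ≡[H] [f x] ++ g (u x) :: [g x, g y] := .spider (by simp) (by simp)
        (walk4 (hf hxy) (hfg y x (G.symm hxy)) (hg hxy))
        (walk4 (hfg x (u x) (hu x)) (hg (G.symm (hu x))) (hg hxy))
    _ = [f x, g (u x), g x] ⬝ [g x, g y] := rfl

lemma Homotopic.exists_isNatural (hG : ∀ v : V, ∃ u, G.Adj v u) (h : Homotopic G H f g) :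
    ∃ s, IsNatural G H f g s := by
  induction h using Relation.ReflTransGen.head_induction_on with
  | refl => exact ⟨_, isNatural_refl⟩
  | head hstep _ ih =>
    obtain ⟨t, ht⟩ := ih
    obtain ⟨s, hs⟩ := exists_isNatural_of_htpyStep hG hstep
    exact ⟨_, hs.trans hstep.1 hstep.2.1 ht⟩

end Natural

lemma IsHom.comp {K : SGraph X} {f : V → W} {g : W → X} {G : SGraph V} {H : SGraph W}
    (hg : IsHom H K g) (hf : IsHom G H f) : IsHom G K (g ∘ f) :=
  fun h => hg (hf h)

section Equivalence

variable {G : SGraph V} {H : SGraph W} {f : V → W} {g : W → V} {s : V → List V}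

lemma HomEqv.of_map (hf : IsHom G H f) (hg : IsHom H G g) (hs : IsNatural G G (g ∘ f) id s)
    {x y : V} {α β : List V} (hα : IsWalkFrom G x y α) (hβ : IsWalkFrom G x y β)
    (h : α.map f ≡[H] β.map f) : α ≡[G] β := by
  have hgf : α.map (g ∘ f) ≡[G] β.map (g ∘ f) := by
    simpa only [List.map_map] using h.map hg
  refine .cancel_left (hs.isWalkFrom x) hα hβ ?_
  calc s x ⬝ α = s x ⬝ α.map id := by rw [List.map_id]
    _ ≡[G] α.map (g ∘ f) ⬝ s y := (hs.naturality hα).symm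
    _ ≡[G] β.map (g ∘ f) ⬝ s y := hgf.wconcat_right (hα.map (hg.comp hf)) (hs.isWalkFrom y)
    _ ≡[G] s x ⬝ β.map id := hs.naturality hβ
    _ = s x ⬝ β := by rw [List.map_id]

/-- The preimage of `β` is `(s v).reverse ⬝ β.map ψ ⬝ s w`, where `s v : ψ (φ v) ⟶ v`. -/
lemma exists_map_homEqv {φ : V → W} {ψ : W → V} {sH : W → List W} (hφ : IsHom G H φ)
    (hψ : IsHom H G ψ) (hs : IsNatural G G (ψ ∘ φ) id s)
    (hsH : IsNatural H H (φ ∘ ψ) id sH)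
    {v w : V} {β : List W} (hβ : IsWalkFrom H (φ v) (φ w) β) :
    ∃ α, IsWalkFrom G v w α ∧ α.map φ ≡[H] β := by
  have hψβ := (hβ.map hψ).wconcat (hs.isWalkFrom w)
  have hα := (hs.isWalkFrom v).reverse.wconcat hψβ
  refine ⟨_, hα, .of_map hψ hφ hsH (hα.map hφ) hβ ?_⟩
  rw [List.map_map]
  refine .cancel_right (hα.map (hψ.comp hφ)) (hβ.map hψ) (hs.isWalkFrom w) ?_
  calc ((s v).reverse ⬝ (β.map ψ ⬝ s w)).map (ψ ∘ φ) ⬝ s w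
        ≡[G] s v ⬝ ((s v).reverse ⬝ (β.map ψ ⬝ s w)).map id := hs.naturality hα
    _ = s v ⬝ (s v).reverse ⬝ (β.map ψ ⬝ s w) := by
        rw [List.map_id, wconcat_assoc _ (hs.isWalkFrom v).reverse.ne_nil]
    _ ≡[G] [ψ (φ v)] ⬝ (β.map ψ ⬝ s w) :=
        (wconcat_reverse_homEqv (hs.isWalkFrom v)).wconcat_right
          ((hs.isWalkFrom v).wconcat (hs.isWalkFrom v).reverse) hψβ
    _ = β.map ψ ⬝ s w := singleton_wconcat hψβ.2.1

end Equivalence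

theorem stmt12_general (G : SGraph V) (H : SGraph W)
    (hG : ∀ v : V, ∃ u, G.Adj v u) (hH : ∀ w : W, ∃ u, H.Adj w u)
    (φ : V → W) (ψ : W → V) (hφ : IsHom G H φ) (hψ : IsHom H G ψ)
    (h1 : Homotopic H H (φ ∘ ψ) id) (h2 : Homotopic G G (ψ ∘ φ) id) :
    (∀ h : W, ∃ (v : V) (l : List W), IsWalkFrom H h (φ v) l) ∧
    (∀ (v w : V) (β : List W), IsWalkFrom H (φ v) (φ w) β →
      ∃ α : List V, IsWalkFrom G v w α ∧ HomEqv H (α.map φ) β) ∧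
    (∀ (v w : V) (α β : List V), IsWalkFrom G v w α → IsWalkFrom G v w β →
      HomEqv H (α.map φ) (β.map φ) → HomEqv G α β) := by
  obtain ⟨sH, hsH⟩ := h1.exists_isNatural hH
  obtain ⟨sG, hsG⟩ := h2.exists_isNatural hG
  exact ⟨fun w => ⟨ψ w, (sH w).reverse, (hsH.isWalkFrom w).reverse⟩,
    fun _ _ _ hβ => exists_map_homEqv hφ hψ hsG hsH hβ,
    fun _ _ _ _ hα hβ => HomEqv.of_map hφ hψ hsG hα hβ⟩

/-- a ×-homotopy equivalence between finite graphs with no isolated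
vertices induces an equivalence of fundamental groupoids: essentially surjective,
full and faithful. -/
theorem stmt12 [Fintype V] [Fintype W] (G : SGraph V) (H : SGraph W)
    (hG : ∀ v : V, ∃ u, G.Adj v u) (hH : ∀ w : W, ∃ u, H.Adj w u)
    (φ : V → W) (ψ : W → V) (hφ : IsHom G H φ) (hψ : IsHom H G ψ)
    (h1 : Homotopic H H (φ ∘ ψ) id) (h2 : Homotopic G G (ψ ∘ φ) id) :
    (∀ h : W, ∃ (v : V) (l : List W), IsWalkFrom H h (φ v) l) ∧
    (∀ (v w : V) (β : List W), IsWalkFrom H (φ v) (φ w) β →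
      ∃ α : List V, IsWalkFrom G v w α ∧ HomEqv H (α.map φ) β) ∧
    (∀ (v w : V) (α β : List V), IsWalkFrom G v w α → IsWalkFrom G v w β →
      HomEqv H (α.map φ) (β.map φ) → HomEqv G α β) :=
  stmt12_general G H hG hH φ ψ hφ hψ h1 h2
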